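/- Consider the Crabb–Davie operators T₁, T₂, T₃ on the 8-dimensional complex Hilbert space with orthonormal basis {e, f₁, f₂, f₃, g₁, g₂, g₃, h}, defined for i, j ∈ {1, 2, 3} by: T_i e = f_i; T_i f_i = −g_i; T_i f_j = g_k whenever {i, j, k} = {1, 2, 3}; T_i g_j = h if j = i and T_i g_j = 0 if j ≠ i; and T_i h = 0. Then each T_i is a contraction, T := T₁T₂T₃ satisfies Te = h and T annihilates the remaining basis vectors, dim 𝒟_T = 7 while dim 𝒟_{T₁} = dim 𝒟_{T₂} = dim 𝒟_{T₃} = 3, and consequently the factorization T = T₁T₂T₃ is not 3-regular; in particular (T₁, T₂, T₃) is not a symmetric 3-regular tuple. -/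

import Mathlib

noncomputable section

open ContinuousLinearMap

/-- The defect operator `D_A = (I - A*A)^{1/2}` of a contraction `A`. -/
def defectOp {E F : Type*} [NormedAddCommGroup E] [InnerProductSpace ℂ E]
    [CompleteSpace E] [NormedAddCommGroup F] [InnerProductSpace ℂ F] [CompleteSpace F]
    (A : E →L[ℂ] F) : E →L[ℂ] E :=
  CFC.sqrt (1 - (adjoint A).comp A)

/-- The defect space `𝒟_A`, the closure of the range of the defect operator. -/
def defectSpace {E F : Type*} [NormedAddCommGroup E] [InnerProductSpace ℂ E]
    [CompleteSpace E] [NormedAddCommGroup F] [InnerProductSpace ℂ F] [CompleteSpace F]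
    (A : E →L[ℂ] F) : Submodule ℂ E :=
  (LinearMap.range (defectOp A : E →ₗ[ℂ] E)).topologicalClosure

theorem defectOp_mem {E F : Type*} [NormedAddCommGroup E] [InnerProductSpace ℂ E]
    [CompleteSpace E] [NormedAddCommGroup F] [InnerProductSpace ℂ F] [CompleteSpace F]
    (A : E →L[ℂ] F) (x : E) : defectOp A x ∈ defectSpace A :=
  Submodule.le_topologicalClosure _ (LinearMap.mem_range_self _ x)

variable {H : ℕ → Type*} [∀ n, NormedAddCommGroup (H n)] [∀ n, InnerProductSpace ℂ (H n)]
  [∀ n, CompleteSpace (H n)]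

/-- The product `A_{a+l-1} ⋯ A_{a+1} A_a : H a → H (a+l)` of a chain of operators. -/
def prodLen (A : ∀ n, H n →L[ℂ] H (n + 1)) (a : ℕ) : ∀ l : ℕ, H a →L[ℂ] H (a + l)
  | 0 => ContinuousLinearMap.id ℂ (H a)
  | l + 1 => (A (a + l)).comp (prodLen A a l)

/-- The product `A_{b-1} ⋯ A_{a+1} A_a : H a → H b` (junk value `0` if `b < a`). -/
def prodSeg (A : ∀ n, H n →L[ℂ] H (n + 1)) (a b : ℕ) : H a →L[ℂ] H b :=
  if h : a ≤ b then (Nat.add_sub_cancel' h ▸ prodLen A a (b - a)) else 0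

/-- The tuple `(D_{A_k} A_{k-1} ⋯ A_1 h, …, D_{A_2} A_1 h, D_{A_1} h)` (with zero-based
indexing: component `i` is `D_{A i} (A_{i-1} ⋯ A_0 h)`), viewed as an element of the
Hilbert (ℓ²) direct sum of the defect spaces. -/
def defectTuple (A : ∀ n, H n →L[ℂ] H (n + 1)) (k : ℕ) (h : H 0) :
    PiLp 2 (fun i : Fin k => ↥(defectSpace (A i))) :=
  WithLp.toLp 2 fun i => ⟨defectOp (A i) (prodSeg A 0 i h), defectOp_mem _ _⟩

/-- The factorization `A = A_{k-1} ⋯ A_0` is `k`-regular if the set of defect tuples is dense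
in the Hilbert direct sum of the defect spaces. -/
def IsRegularFactorization (A : ∀ n, H n →L[ℂ] H (n + 1)) (k : ℕ) : Prop :=
  Dense (Set.range (defectTuple A k))

/-- A two-factor factorization `A = B ∘ C` is `2`-regular if
`{ D_B (C h) ⊕ D_C h : h }` is dense in `𝒟_B ⊕ 𝒟_C`. -/
def IsRegularPair {E F G : Type*} [NormedAddCommGroup E] [InnerProductSpace ℂ E]
    [CompleteSpace E] [NormedAddCommGroup F] [InnerProductSpace ℂ F] [CompleteSpace F]
    [NormedAddCommGroup G] [InnerProductSpace ℂ G] [CompleteSpace G]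
    (B : F →L[ℂ] G) (C : E →L[ℂ] F) : Prop :=
  Dense (Set.range fun h : E =>
    ((WithLp.equiv 2 (↥(defectSpace B) × ↥(defectSpace C))).symm
      (⟨defectOp B (C h), defectOp_mem _ _⟩, ⟨defectOp C h, defectOp_mem _ _⟩)))

end

noncomputable section
/-- The chain of operators corresponding to the ordered product
`T_{σ(1)} T_{σ(2)} ⋯ T_{σ(k)}` of a `k`-tuple of operators on a single space: the operator
applied first (index `0` in the chain) is `T_{σ(k)}`, and the one applied last is `T_{σ(1)}`. -/
def chainOf {E : Type*} [NormedAddCommGroup E] [InnerProductSpace ℂ E] [CompleteSpace E]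
    {k : ℕ} (T : Fin k → (E →L[ℂ] E)) (σ : Equiv.Perm (Fin k)) : ℕ → (E →L[ℂ] E) :=
  fun n => if h : n < k then T (σ ((⟨n, h⟩ : Fin k).rev)) else 1
end

noncomputable section
namespace CD

/- The 8-dimensional Hilbert space has orthonormal basis
`e = e₀, f₁ = e₁, f₂ = e₂, f₃ = e₃, g₁ = e₄, g₂ = e₅, g₃ = e₆, h = e₇`. -/

/-- The matrix of the first Crabb–Davie operator:
`e ↦ f₁`, `f₁ ↦ -g₁`, `f₂ ↦ g₃`, `f₃ ↦ g₂`, `g₁ ↦ h`, `g₂, g₃, h ↦ 0`. -/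
def M1 : Matrix (Fin 8) (Fin 8) ℂ :=
  !![0, 0, 0, 0, 0, 0, 0, 0;
     1, 0, 0, 0, 0, 0, 0, 0;
     0, 0, 0, 0, 0, 0, 0, 0;
     0, 0, 0, 0, 0, 0, 0, 0;
     0, -1, 0, 0, 0, 0, 0, 0;
     0, 0, 0, 1, 0, 0, 0, 0;
     0, 0, 1, 0, 0, 0, 0, 0;
     0, 0, 0, 0, 1, 0, 0, 0]

/-- The matrix of the second Crabb–Davie operator:
`e ↦ f₂`, `f₁ ↦ g₃`, `f₂ ↦ -g₂`, `f₃ ↦ g₁`, `g₂ ↦ h`, `g₁, g₃, h ↦ 0`. -/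
def M2 : Matrix (Fin 8) (Fin 8) ℂ :=
  !![0, 0, 0, 0, 0, 0, 0, 0;
     0, 0, 0, 0, 0, 0, 0, 0;
     1, 0, 0, 0, 0, 0, 0, 0;
     0, 0, 0, 0, 0, 0, 0, 0;
     0, 0, 0, 1, 0, 0, 0, 0;
     0, 0, -1, 0, 0, 0, 0, 0;
     0, 1, 0, 0, 0, 0, 0, 0;
     0, 0, 0, 0, 0, 1, 0, 0]

/-- The matrix of the third Crabb–Davie operator:
`e ↦ f₃`, `f₁ ↦ g₂`, `f₂ ↦ g₁`, `f₃ ↦ -g₃`, `g₃ ↦ h`, `g₁, g₂, h ↦ 0`. -/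
def M3 : Matrix (Fin 8) (Fin 8) ℂ :=
  !![0, 0, 0, 0, 0, 0, 0, 0;
     0, 0, 0, 0, 0, 0, 0, 0;
     0, 0, 0, 0, 0, 0, 0, 0;
     1, 0, 0, 0, 0, 0, 0, 0;
     0, 0, 1, 0, 0, 0, 0, 0;
     0, 1, 0, 0, 0, 0, 0, 0;
     0, 0, 0, -1, 0, 0, 0, 0;
     0, 0, 0, 0, 0, 0, 1, 0]

/-- The first Crabb–Davie operator on `ℂ⁸`. -/
def T1 : EuclideanSpace ℂ (Fin 8) →L[ℂ] EuclideanSpace ℂ (Fin 8) :=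
  Matrix.toEuclideanCLM (𝕜 := ℂ) M1

/-- The second Crabb–Davie operator on `ℂ⁸`. -/
def T2 : EuclideanSpace ℂ (Fin 8) →L[ℂ] EuclideanSpace ℂ (Fin 8) :=
  Matrix.toEuclideanCLM (𝕜 := ℂ) M2

/-- The third Crabb–Davie operator on `ℂ⁸`. -/
def T3 : EuclideanSpace ℂ (Fin 8) →L[ℂ] EuclideanSpace ℂ (Fin 8) :=
  Matrix.toEuclideanCLM (𝕜 := ℂ) M3

end CD
end

/-! Each `Mᵢ` is a partial isometry: `1 - MᵢᴴMᵢ` is the coordinate projection onto three basis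
vectors, and a projection is its own square root, so it is the defect operator of `Tᵢ`. Likewise
`M₁M₂M₃` is the matrix unit sending `e` to `h`, whose defect projects onto the seven other basis
vectors. For every ordering of the factors the defect tuple is a linear map from `ℂ⁸` into a
space of dimension `3 + 3 + 3 = 9`; in finite dimensions a dense subspace is everything, so this
map would have to be surjective, which it cannot be. -/

open ContinuousLinearMap Matrix

section Defect

variable {E F : Type*} [NormedAddCommGroup E] [InnerProductSpace ℂ E] [CompleteSpace E]
  [NormedAddCommGroup F] [InnerProductSpace ℂ F] [CompleteSpace F] {A : E →L[ℂ] F}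

lemma defectOp_eq_of_isStarProjection (h : IsStarProjection (1 - adjoint A ∘L A)) :
    defectOp A = 1 - adjoint A ∘L A :=
  CFC.sqrt_unique h.isIdempotentElem.eq h.nonneg

lemma norm_le_one_of_adjoint_comp_self_le_one (h : adjoint A ∘L A ≤ 1) : ‖A‖ ≤ 1 := by
  have h' : ‖adjoint A ∘L A‖ ≤ 1 :=
    (CStarAlgebra.norm_le_one_iff_of_nonneg _
      ((nonneg_iff_isPositive _).mpr (isPositive_adjoint_comp_self A))).mpr h
  rw [norm_adjoint_comp_self] at h'
  nlinarith [norm_nonneg A]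

lemma finrank_defectSpace [FiniteDimensional ℂ E] :
    Module.finrank ℂ (defectSpace A) =
      Module.finrank ℂ (LinearMap.range (defectOp A : E →ₗ[ℂ] E)) := by
  rw [defectSpace, (Submodule.closed_of_finiteDimensional _).submodule_topologicalClosure_eq]

end Defect

section CoordProj

variable {n : Type*} [Fintype n] [DecidableEq n]

def coordProj (R : Type*) [Zero R] [One R] (S : Finset n) : Matrix n n R :=
  diagonal fun i => if i ∈ S then 1 else 0

lemma isStarProjection_coordProj (R : Type*) [Semiring R] [StarRing R] (S : Finset n) :
    IsStarProjection (coordProj R S) := by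
  refine ⟨?_, ?_⟩
  · rw [IsIdempotentElem, coordProj, diagonal_mul_diagonal]
    congr 1
    ext i
    by_cases h : i ∈ S <;> simp [h]
  · rw [IsSelfAdjoint, coordProj, star_eq_conjTranspose, diagonal_conjTranspose]
    congr 1
    ext i
    by_cases h : i ∈ S <;> simp [h]

lemma rank_coordProj (R : Type*) [Field R] (S : Finset n) : (coordProj R S).rank = S.card := by
  classical
  rw [coordProj, rank_diagonal]
  simp [Fintype.card_subtype]

lemma one_sub_conjTranspose_single_mul_single (i j : n) :
    1 - (single i j (1 : ℂ))ᴴ * single i j 1 = coordProj ℂ {j}ᶜ := by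
  rw [conjTranspose_single, star_one, single_mul_single_same, mul_one]
  ext a b
  simp only [coordProj, Finset.mem_compl, Finset.mem_singleton, Matrix.sub_apply,
    Matrix.single_apply, Matrix.one_apply, diagonal_apply]
  grind

end CoordProj

section EuclideanCLM

variable {n : Type*} [Fintype n] [DecidableEq n]

local notation "toCLM" => Matrix.toEuclideanCLM (n := n) (𝕜 := ℂ)

lemma one_sub_adjoint_comp_self_toEuclideanCLM (M : Matrix n n ℂ) :
    1 - adjoint (toCLM M) ∘L toCLM M = toCLM (1 - Mᴴ * M) := by
  rw [← star_eq_adjoint, ← map_star, star_eq_conjTranspose, map_sub, map_one, map_mul]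
  rfl

lemma toEuclideanCLM_single_apply_single (i j k : n) (c : ℂ) :
    toCLM (single i j c) (EuclideanSpace.single k 1) =
      if k = j then EuclideanSpace.single i c else 0 := by
  ext a
  simp [EuclideanSpace.single, mulVec_single, Matrix.single_apply,
    apply_ite (fun x : EuclideanSpace ℂ n => x a)]
  grind

variable {M : Matrix n n ℂ} {S : Finset n}

lemma defectOp_toEuclideanCLM (hM : 1 - Mᴴ * M = coordProj ℂ S) :
    defectOp (toCLM M) = toCLM (coordProj ℂ S) := by
  have h := (isStarProjection_coordProj ℂ S).map toCLM
  rw [← hM, ← one_sub_adjoint_comp_self_toEuclideanCLM] at h ⊢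
  exact defectOp_eq_of_isStarProjection h

lemma norm_toEuclideanCLM_le_one (hM : 1 - Mᴴ * M = coordProj ℂ S) : ‖toCLM M‖ ≤ 1 := by
  have h := ((isStarProjection_coordProj ℂ S).map toCLM).nonneg
  rw [← hM, ← one_sub_adjoint_comp_self_toEuclideanCLM, sub_nonneg] at h
  exact norm_le_one_of_adjoint_comp_self_le_one h

lemma finrank_defectSpace_toEuclideanCLM (hM : 1 - Mᴴ * M = coordProj ℂ S) :
    Module.finrank ℂ (defectSpace (toCLM M)) = S.card := by
  rw [finrank_defectSpace, defectOp_toEuclideanCLM hM, coe_toEuclideanCLM_eq_toEuclideanLin,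
    toEuclideanLin_eq_toLin_orthonormal, ← rank_eq_finrank_range_toLin, rank_coordProj]

end EuclideanCLM

section Regular

variable {H : ℕ → Type*} [∀ n, NormedAddCommGroup (H n)] [∀ n, InnerProductSpace ℂ (H n)]
  [∀ n, CompleteSpace (H n)]

noncomputable def defectTupleₗ (A : ∀ n, H n →L[ℂ] H (n + 1)) (k : ℕ) :
    H 0 →ₗ[ℂ] PiLp 2 (fun i : Fin k => ↥(defectSpace (A i))) where
  toFun := defectTuple A k
  map_add' x y := by ext i; simp [defectTuple]
  map_smul' c x := by ext i; simp [defectTuple]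

lemma IsRegularFactorization.sum_finrank_defectSpace_le [∀ n, FiniteDimensional ℂ (H n)]
    {A : ∀ n, H n →L[ℂ] H (n + 1)} {k : ℕ} (hA : IsRegularFactorization A k) :
    ∑ i : Fin k, Module.finrank ℂ (defectSpace (A i)) ≤ Module.finrank ℂ (H 0) := by
  have htop : LinearMap.range (defectTupleₗ A k) = ⊤ := by
    rw [← (LinearMap.range (defectTupleₗ A k)).closed_of_finiteDimensional
      |>.submodule_topologicalClosure_eq, ← Submodule.dense_iff_topologicalClosure_eq_top,
      LinearMap.coe_range]
    exact hA
  calc ∑ i : Fin k, Module.finrank ℂ (defectSpace (A i))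
      = Module.finrank ℂ (PiLp 2 (fun i : Fin k => ↥(defectSpace (A i)))) := by
        rw [(WithLp.linearEquiv 2 ℂ _).finrank_eq, Module.finrank_pi_fintype]
    _ = Module.finrank ℂ (LinearMap.range (defectTupleₗ A k)) := by rw [htop, finrank_top]
    _ ≤ Module.finrank ℂ (H 0) := LinearMap.finrank_range_le _

end Regular

section Chain

variable {E : Type*} [NormedAddCommGroup E] [InnerProductSpace ℂ E] [CompleteSpace E] {k : ℕ}

lemma sum_comp_chainOf {M : Type*} [AddCommMonoid M] (T : Fin k → (E →L[ℂ] E))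
    (σ : Equiv.Perm (Fin k)) (f : (E →L[ℂ] E) → M) :
    ∑ i : Fin k, f (chainOf T σ i) = ∑ i, f (T i) := by
  simp only [chainOf, Fin.is_lt, dif_pos, Fin.eta]
  exact Fintype.sum_equiv (Fin.revPerm.trans σ) _ _ fun i => rfl

lemma not_isRegularFactorization_chainOf [FiniteDimensional ℂ E] (T : Fin k → (E →L[ℂ] E))
    (σ : Equiv.Perm (Fin k))
    (hT : Module.finrank ℂ E < ∑ i, Module.finrank ℂ (defectSpace (T i))) :
    ¬ IsRegularFactorization (H := fun _ => E) (chainOf T σ) k := fun hreg =>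
  hT.not_ge <| (sum_comp_chainOf T σ fun S => Module.finrank ℂ (defectSpace S)).symm.trans_le
    hreg.sum_finrank_defectSpace_le

end Chain

namespace CD

lemma one_sub_conjTranspose_M1_mul_M1 : 1 - M1ᴴ * M1 = coordProj ℂ {5, 6, 7} := by
  simp [M1, coordProj, ← Matrix.ext_iff, Fin.forall_fin_succ, Matrix.one_apply, mul_apply,
    Fin.sum_univ_succ]

lemma one_sub_conjTranspose_M2_mul_M2 : 1 - M2ᴴ * M2 = coordProj ℂ {4, 6, 7} := by
  simp [M2, coordProj, ← Matrix.ext_iff, Fin.forall_fin_succ, Matrix.one_apply, mul_apply,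
    Fin.sum_univ_succ]

lemma one_sub_conjTranspose_M3_mul_M3 : 1 - M3ᴴ * M3 = coordProj ℂ {4, 5, 7} := by
  simp [M3, coordProj, ← Matrix.ext_iff, Fin.forall_fin_succ, Matrix.one_apply, mul_apply,
    Fin.sum_univ_succ]

lemma M1_mul_M2_mul_M3 : M1 * (M2 * M3) = single 7 0 1 := by
  simp [M1, M2, M3, ← Matrix.ext_iff, Fin.forall_fin_succ, Matrix.single_apply]

lemma T1_comp_T2_comp_T3 : T1 ∘L (T2 ∘L T3) = toEuclideanCLM (𝕜 := ℂ) (single 7 0 1) := by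
  rw [← M1_mul_M2_mul_M3, map_mul, map_mul]
  rfl

lemma finrank_defectSpace_T (i : Fin 3) :
    Module.finrank ℂ (defectSpace (![T1, T2, T3] i)) = 3 := by
  fin_cases i
  exacts [finrank_defectSpace_toEuclideanCLM one_sub_conjTranspose_M1_mul_M1,
    finrank_defectSpace_toEuclideanCLM one_sub_conjTranspose_M2_mul_M2,
    finrank_defectSpace_toEuclideanCLM one_sub_conjTranspose_M3_mul_M3]

lemma not_isRegularFactorization_chainOf_T (σ : Equiv.Perm (Fin 3)) :
    ¬ IsRegularFactorization (H := fun _ => EuclideanSpace ℂ (Fin 8))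
      (chainOf ![T1, T2, T3] σ) 3 :=
  not_isRegularFactorization_chainOf _ σ (by simp only [finrank_defectSpace_T]; simp)

end CD

/-- The Crabb–Davie operators `T₁, T₂, T₃` on the 8-dimensional Hilbert
space with orthonormal basis `{e, f₁, f₂, f₃, g₁, g₂, g₃, h}` are contractions; the product
`T = T₁T₂T₃` sends `e` to `h` and annihilates the other basis vectors; `dim 𝒟_T = 7` while
`dim 𝒟_{T₁} = dim 𝒟_{T₂} = dim 𝒟_{T₃} = 3`; the factorization `T = T₁T₂T₃` is not
`3`-regular, and `(T₁, T₂, T₃)` is not a symmetric `3`-regular tuple. -/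
theorem statement18 :
    (‖CD.T1‖ ≤ 1 ∧ ‖CD.T2‖ ≤ 1 ∧ ‖CD.T3‖ ≤ 1) ∧
    ((CD.T1.comp (CD.T2.comp CD.T3)) (EuclideanSpace.single (0 : Fin 8) 1)
        = EuclideanSpace.single (7 : Fin 8) 1 ∧
      ∀ j : Fin 8, j ≠ 0 →
        (CD.T1.comp (CD.T2.comp CD.T3)) (EuclideanSpace.single j 1) = 0) ∧
    Module.finrank ℂ ↥(defectSpace (CD.T1.comp (CD.T2.comp CD.T3))) = 7 ∧
    (Module.finrank ℂ ↥(defectSpace CD.T1) = 3 ∧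
      Module.finrank ℂ ↥(defectSpace CD.T2) = 3 ∧
      Module.finrank ℂ ↥(defectSpace CD.T3) = 3) ∧
    ¬ IsRegularFactorization (H := fun _ => EuclideanSpace ℂ (Fin 8))
        (chainOf ![CD.T1, CD.T2, CD.T3] (Equiv.refl (Fin 3))) 3 ∧
    ¬ ∀ σ : Equiv.Perm (Fin 3),
        IsRegularFactorization (H := fun _ => EuclideanSpace ℂ (Fin 8))
          (chainOf ![CD.T1, CD.T2, CD.T3] σ) 3 := by
  refine ⟨⟨norm_toEuclideanCLM_le_one CD.one_sub_conjTranspose_M1_mul_M1,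
      norm_toEuclideanCLM_le_one CD.one_sub_conjTranspose_M2_mul_M2,
      norm_toEuclideanCLM_le_one CD.one_sub_conjTranspose_M3_mul_M3⟩,
    ⟨?_, fun j hj => ?_⟩, ?_,
    ⟨CD.finrank_defectSpace_T 0, CD.finrank_defectSpace_T 1, CD.finrank_defectSpace_T 2⟩,
    CD.not_isRegularFactorization_chainOf_T _,
    fun h => CD.not_isRegularFactorization_chainOf_T _ (h 1)⟩
  · rw [CD.T1_comp_T2_comp_T3, toEuclideanCLM_single_apply_single, if_pos rfl]
  · rw [CD.T1_comp_T2_comp_T3, toEuclideanCLM_single_apply_single, if_neg hj]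
  · rw [CD.T1_comp_T2_comp_T3,
      finrank_defectSpace_toEuclideanCLM (one_sub_conjTranspose_single_mul_single _ _)]
    rfl
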